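/- Let u_1, …, u_m be vectors in ℝ^{N_h} and let S ∈ ℝ^{N_h × m} be the matrix whose j-th column is u_j, with singular value decomposition S = W Σ Zᵀ and singular values σ_1 ≥ σ_2 ≥ … . For every N ≤ min(N_h, m), the first N left singular vectors ζ_1, …, ζ_N (the first N columns of W) form an orthonormal family achieving E(ζ_1, …, ζ_N) = Σ_{i=N+1}^{min(N_h,m)} σ_i²; consequently they minimize the POD error functional E over all orthonormal families of size N in ℝ^{N_h}. -/

import Mathlib

/-!
Write `d i = σᵢ²` (and `d i = 0` past `min N_h m`), let `wᵢ` be the columns of `W`, and put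
`Q(x) = ∑ⱼ ⟪x, uⱼ⟫²`. The SVD gives `S Sᵀ = W diag(d) Wᵀ`, i.e. `Q(x) = ∑ᵢ dᵢ ⟪wᵢ, x⟫²`.
For an orthonormal family `z₁, …, z_N`, Pythagoras gives `E(z) = ∑ⱼ ‖uⱼ‖² - ∑ₖ Q(zₖ)`, and
`∑ₖ Q(zₖ) = ∑ᵢ dᵢ tᵢ` with `tᵢ = ∑ₖ ⟪wᵢ, zₖ⟫²`. By Bessel `0 ≤ tᵢ ≤ 1`, by Parseval
`∑ᵢ tᵢ = N`, so since `d` is nonincreasing, `∑ᵢ dᵢ tᵢ ≤ d₀ + ⋯ + d_{N-1}`, with equality for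
`zₖ = wₖ`.
-/

open Finset Matrix Submodule
open scoped RealInnerProductSpace

theorem Orthonormal.norm_sub_orthogonalProjectionOnto_span_sq {E : Type*} [NormedAddCommGroup E]
    [InnerProductSpace ℝ E] [FiniteDimensional ℝ E] {ι : Type*} [Fintype ι] {z : ι → E}
    (hz : Orthonormal ℝ z) (v : E) :
    ‖v - ((span ℝ (Set.range z)).orthogonalProjectionOnto v : E)‖ ^ 2 =
      ‖v‖ ^ 2 - ∑ k, ⟪z k, v⟫ ^ 2 := by
  set K := span ℝ (Set.range z)
  let b : OrthonormalBasis ι ℝ K := (Module.Basis.span hz.linearIndependent).toOrthonormalBasis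
    (by rw [funext (Module.Basis.span_apply hz.linearIndependent)]; exact orthonormal_span hz)
  have hb : ∀ k, (b k : E) = z k := fun k => by simp [b, Module.Basis.span_apply]
  have hproj : ‖(K.orthogonalProjectionOnto v : E)‖ ^ 2 = ∑ k, ⟪z k, v⟫ ^ 2 := by
    rw [Submodule.norm_coe]
    simp_rw [← b.sum_sq_inner_right, inner_orthogonalProjectionOnto_eq_of_mem_left, hb]
  have hpyth := norm_sq_eq_add_norm_sq_starProjection v K
  rw [starProjection_orthogonal_val, starProjection_apply, hproj] at hpyth
  linarith

theorem Fin.sum_ite_lt_eq_sum_range {M : Type*} [AddCommMonoid M] (f : ℕ → M) {N n : ℕ}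
    (hNn : N ≤ n) : ∑ i : Fin n, (if (i : ℕ) < N then f i else 0) = ∑ i ∈ range N, f i := by
  rw [Fin.sum_univ_eq_sum_range (fun i => if i < N then f i else 0), ← sum_range_add_sum_Ico _ hNn,
    sum_congr rfl fun i hi => if_pos (mem_range.1 hi),
    sum_eq_zero fun i hi => if_neg (not_lt.2 (mem_Ico.1 hi).1), add_zero]

theorem sum_mul_le_sum_range_of_antitone {d : ℕ → ℝ} (hd : Antitone d) {N n : ℕ} (hNn : N ≤ n)
    {t : Fin n → ℝ} (ht0 : ∀ i, 0 ≤ t i) (ht1 : ∀ i, t i ≤ 1) (hsum : ∑ i, t i = N) :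
    ∑ i : Fin n, d i * t i ≤ ∑ i ∈ range N, d i := by
  -- compare each term with the pivot `d N`, which separates the first `N` values from the rest
  have hterm : ∀ i : Fin n, d i * t i - (if (i : ℕ) < N then d i else 0) ≤
      d N * (t i - if (i : ℕ) < N then 1 else 0) := by
    intro i
    split_ifs with h
    · nlinarith [hd h.le, ht1 i]
    · nlinarith [hd (not_lt.1 h), ht0 i]
  have hsum_le := sum_le_sum fun i (_ : i ∈ univ) => hterm i
  rw [sum_sub_distrib, ← mul_sum, sum_sub_distrib, hsum, Fin.sum_ite_lt_eq_sum_range _ hNn,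
    Fin.sum_ite_lt_eq_sum_range (fun _ => (1 : ℝ)) hNn] at hsum_le
  simpa using hsum_le

section PODError

variable {E : Type*} [NormedAddCommGroup E] [InnerProductSpace ℝ E] [FiniteDimensional ℝ E]
  {J ι : Type*} [Fintype J] [Fintype ι]

noncomputable def podError (u : J → E) (z : ι → E) : ℝ :=
  ∑ j, ‖u j - ((span ℝ (Set.range z)).orthogonalProjectionOnto (u j) : E)‖ ^ 2

theorem podError_eq {u : J → E} {z : ι → E} (hz : Orthonormal ℝ z) :
    podError u z = ∑ j, ‖u j‖ ^ 2 - ∑ k, ∑ j, ⟪z k, u j⟫ ^ 2 := by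
  simp_rw [podError, hz.norm_sub_orthogonalProjectionOnto_span_sq, sum_sub_distrib]
  rw [sum_comm]

end PODError

section CorrelationDiagonal

variable {E : Type*} [NormedAddCommGroup E] [InnerProductSpace ℝ E] {n : ℕ}
  {b : OrthonormalBasis (Fin n) ℝ E} {J : Type*} [Fintype J] {u : J → E} {d : ℕ → ℝ}

def CorrelationDiagonal (b : OrthonormalBasis (Fin n) ℝ E) (u : J → E) (d : ℕ → ℝ) : Prop :=
  ∀ x, ∑ j, ⟪x, u j⟫ ^ 2 = ∑ i : Fin n, d i * ⟪b i, x⟫ ^ 2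

theorem CorrelationDiagonal.sum_inner_sq_basis (h : CorrelationDiagonal b u d) (k : Fin n) :
    ∑ j, ⟪b k, u j⟫ ^ 2 = d k := by
  simp [h (b k), b.inner_eq_ite]

theorem CorrelationDiagonal.sum_norm_sq (h : CorrelationDiagonal b u d) :
    ∑ j, ‖u j‖ ^ 2 = ∑ i ∈ range n, d i := by
  simp_rw [← b.sum_sq_inner_right]
  rw [sum_comm, ← Fin.sum_univ_eq_sum_range]
  exact sum_congr rfl fun k _ => h.sum_inner_sq_basis k

theorem CorrelationDiagonal.sum_sum_inner_sq_castLE (h : CorrelationDiagonal b u d) {N : ℕ}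
    (hN : N ≤ n) : ∑ k : Fin N, ∑ j, ⟪b (Fin.castLE hN k), u j⟫ ^ 2 = ∑ i ∈ range N, d i := by
  rw [← Fin.sum_univ_eq_sum_range]
  exact sum_congr rfl fun k _ => h.sum_inner_sq_basis _

theorem CorrelationDiagonal.sum_sum_inner_sq_le (h : CorrelationDiagonal b u d)
    (hd : Antitone d) {N : ℕ} (hN : N ≤ n) {z : Fin N → E} (hz : Orthonormal ℝ z) :
    ∑ k, ∑ j, ⟪z k, u j⟫ ^ 2 ≤ ∑ i ∈ range N, d i := by
  set t : Fin n → ℝ := fun i => ∑ k, ⟪b i, z k⟫ ^ 2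
  have ht1 : ∀ i, t i ≤ 1 := fun i => by
    simpa [t, real_inner_comm] using hz.sum_inner_products_le (b i) (s := univ)
  have hsum : ∑ i, t i = N := by
    simp only [t]
    rw [sum_comm]
    simp [b.sum_sq_inner_right, hz.norm_eq_one]
  calc ∑ k, ∑ j, ⟪z k, u j⟫ ^ 2 = ∑ i : Fin n, d i * t i := by
        simp_rw [h _, t, mul_sum]
        exact sum_comm
    _ ≤ ∑ i ∈ range N, d i :=
        sum_mul_le_sum_range_of_antitone hd hN (fun i => sum_nonneg fun k _ => sq_nonneg _) ht1 hsum

variable [FiniteDimensional ℝ E]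

theorem CorrelationDiagonal.podError_comp_castLE (h : CorrelationDiagonal b u d) {N : ℕ} (hN : N ≤ n) :
    podError u (b ∘ Fin.castLE hN) = ∑ i ∈ range n, d i - ∑ i ∈ range N, d i := by
  rw [podError_eq (b.orthonormal.comp _ (Fin.castLE_injective hN)), h.sum_norm_sq]
  exact congrArg _ (h.sum_sum_inner_sq_castLE hN)

theorem CorrelationDiagonal.podError_comp_castLE_le (h : CorrelationDiagonal b u d) (hd : Antitone d)
    {N : ℕ} (hN : N ≤ n) {z : Fin N → E} (hz : Orthonormal ℝ z) :
    podError u (b ∘ Fin.castLE hN) ≤ podError u z := by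
  rw [h.podError_comp_castLE hN, podError_eq hz, h.sum_norm_sq]
  linarith [h.sum_sum_inner_sq_le hd hN hz]

end CorrelationDiagonal

section SVD

variable {n m : ℕ}

def svdDiagonal (σ : Fin (min n m) → ℝ) : Matrix (Fin n) (Fin m) ℝ :=
  of fun i j => if h : (i : ℕ) = j ∧ (i : ℕ) < min n m then σ ⟨i, h.2⟩ else 0

noncomputable def singularValueSq (σ : Fin (min n m) → ℝ) (i : ℕ) : ℝ :=
  if h : i < min n m then σ ⟨i, h⟩ ^ 2 else 0

theorem svdDiagonal_mul_transpose (σ : Fin (min n m) → ℝ) :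
    svdDiagonal σ * (svdDiagonal σ)ᵀ = diagonal fun i : Fin n => singularValueSq σ i := by
  ext i i'
  by_cases hi : (i : ℕ) < m
  · rw [mul_apply, Fintype.sum_eq_single ⟨i, hi⟩]
    · by_cases hii : i = i'
      · subst hii
        simp [svdDiagonal, singularValueSq, hi, sq]
      · have : (i' : ℕ) ≠ i := fun h => hii (Fin.ext h.symm)
        simp [svdDiagonal, hii, this]
    · intro j hj
      have : (i : ℕ) ≠ j := fun h => hj (Fin.ext h.symm)
      simp [svdDiagonal, this]
  · simp [svdDiagonal, singularValueSq, mul_apply, diagonal_apply, hi]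

theorem antitone_singularValueSq {σ : Fin (min n m) → ℝ} (h0 : ∀ i, 0 ≤ σ i) (hσ : Antitone σ) :
    Antitone (singularValueSq σ) := by
  intro i j hij
  unfold singularValueSq
  split_ifs with hj hi hi
  · exact pow_le_pow_left₀ (h0 _) (hσ hij) 2
  · omega
  · positivity
  · rfl

theorem sum_range_sub_sum_range_singularValueSq (σ : Fin (min n m) → ℝ) {N : ℕ}
    (hN : N ≤ min n m) :
    ∑ i ∈ range n, singularValueSq σ i - ∑ i ∈ range N, singularValueSq σ i =
      ∑ i : Fin (min n m), if N ≤ (i : ℕ) then σ i ^ 2 else 0 := by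
  have hmin : ∑ i ∈ range n, singularValueSq σ i = ∑ i ∈ range (min n m), singularValueSq σ i :=
    (sum_subset (range_subset_range.2 (min_le_left n m)) fun i _ hi => by
      rw [singularValueSq, dif_neg (by simpa using hi)]).symm
  have hσ : ∀ i : Fin (min n m), σ i ^ 2 = singularValueSq σ i := fun i => by
    rw [singularValueSq, dif_pos i.isLt]
  rw [hmin, ← sum_range_add_sum_Ico _ hN, add_sub_cancel_left]
  simp_rw [hσ, Fin.sum_univ_eq_sum_range (fun i => if N ≤ i then singularValueSq σ i else 0),
    ← sum_filter, range_eq_Ico, Ico_filter_le, max_eq_right (Nat.zero_le N)]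

end SVD

section Columns

variable {ι : Type*} [Fintype ι] [DecidableEq ι]

noncomputable def columnOrthonormalBasis (W : Matrix ι ι ℝ) (hW : W ∈ orthogonalGroup ι ℝ) :
    OrthonormalBasis ι ℝ (EuclideanSpace ℝ ι) :=
  have hon : Orthonormal ℝ fun i => WithLp.toLp 2 (Wᵀ i) := by
    rw [orthonormal_iff_ite]
    intro i j
    simpa [mul_apply, one_apply, EuclideanSpace.inner_eq_star_dotProduct, dotProduct, mul_comm]
      using congrFun₂ ((mem_orthogonalGroup_iff' ι ℝ).1 hW) i j
  OrthonormalBasis.mk hon (hon.linearIndependent.span_eq_top_of_card_eq_finrank' (by simp)).ge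

theorem columnOrthonormalBasis_apply (W : Matrix ι ι ℝ) (hW : W ∈ orthogonalGroup ι ℝ) (i : ι) :
    columnOrthonormalBasis W hW i = WithLp.toLp 2 (Wᵀ i) := by
  simp [columnOrthonormalBasis]

theorem inner_columnOrthonormalBasis (W : Matrix ι ι ℝ) (hW : W ∈ orthogonalGroup ι ℝ) (i : ι)
    (x : EuclideanSpace ℝ ι) : ⟪columnOrthonormalBasis W hW i, x⟫ = (x.ofLp ᵥ* W) i := by
  simp [columnOrthonormalBasis_apply, EuclideanSpace.inner_eq_star_dotProduct, dotProduct, vecMul]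

end Columns

theorem sum_inner_sq_eq_dotProduct_mul_transpose {ι J : Type*} [Fintype ι] [Fintype J]
    {u : J → EuclideanSpace ℝ ι} {S : Matrix ι J ℝ} (hS : ∀ i j, S i j = u j i)
    (x : EuclideanSpace ℝ ι) : ∑ j, ⟪x, u j⟫ ^ 2 = x.ofLp ⬝ᵥ (S * Sᵀ) *ᵥ x.ofLp := by
  rw [← mulVec_mulVec, dotProduct_mulVec, mulVec_transpose]
  simp [dotProduct, vecMul, hS, EuclideanSpace.inner_eq_star_dotProduct, sq, mul_comm]

theorem dotProduct_mul_diagonal_mul_transpose {ι κ R : Type*} [Fintype ι] [Fintype κ]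
    [DecidableEq κ] [CommRing R] (W : Matrix ι κ R) (d : κ → R) (x : ι → R) :
    x ⬝ᵥ (W * diagonal d * Wᵀ) *ᵥ x = ∑ i, d i * (x ᵥ* W) i ^ 2 := by
  rw [← mulVec_mulVec, ← mulVec_mulVec, dotProduct_mulVec, mulVec_transpose]
  simp [dotProduct, mulVec_diagonal, sq, mul_left_comm]

theorem correlationDiagonal_of_svd {Nh m : ℕ} {u : Fin m → EuclideanSpace ℝ (Fin Nh)}
    {S : Matrix (Fin Nh) (Fin m) ℝ} (hS : ∀ i j, S i j = u j i) {σ : Fin (min Nh m) → ℝ}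
    {W : Matrix (Fin Nh) (Fin Nh) ℝ} {Z : Matrix (Fin m) (Fin m) ℝ}
    (hW : W ∈ orthogonalGroup (Fin Nh) ℝ) (hZ : Z ∈ orthogonalGroup (Fin m) ℝ)
    (hSVD : S = W * svdDiagonal σ * Zᵀ) :
    CorrelationDiagonal (columnOrthonormalBasis W hW) u (singularValueSq σ) := by
  have hSSt : S * Sᵀ = W * (svdDiagonal σ * (svdDiagonal σ)ᵀ) * Wᵀ := by
    simp only [hSVD, transpose_mul, transpose_transpose, Matrix.mul_assoc]
    rw [← Matrix.mul_assoc Zᵀ Z, (mem_orthogonalGroup_iff' (Fin m) ℝ).1 hZ, Matrix.one_mul]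
  intro x
  rw [sum_inner_sq_eq_dotProduct_mul_transpose hS, hSSt, svdDiagonal_mul_transpose,
    dotProduct_mul_diagonal_mul_transpose]
  simp_rw [inner_columnOrthonormalBasis]

/-- **Optimality of the POD basis.** The first `N` left singular vectors
`ζ₁, …, ζ_N` of the snapshot matrix `S` (the first `N` columns of the orthogonal
factor `W` in an SVD `S = W Σ Zᵀ`) form an orthonormal family, achieve
`E(ζ₁, …, ζ_N) = ∑_{i>N} σᵢ²`, and hence minimize the POD error functional
over all orthonormal families of size `N` in `ℝ^{N_h}`. -/
theorem pod_basis_optimality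
    (Nh m : ℕ) (u : Fin m → EuclideanSpace ℝ (Fin Nh))
    (S : Matrix (Fin Nh) (Fin m) ℝ) (hS : ∀ i j, S i j = u j i)
    (σ : Fin (min Nh m) → ℝ) (hσ_nonneg : ∀ i, 0 ≤ σ i) (hσ_anti : Antitone σ)
    (W : Matrix (Fin Nh) (Fin Nh) ℝ) (Z : Matrix (Fin m) (Fin m) ℝ)
    (hW : W ∈ Matrix.orthogonalGroup (Fin Nh) ℝ)
    (hZ : Z ∈ Matrix.orthogonalGroup (Fin m) ℝ)
    (hSVD : S = W * (Matrix.of fun (i : Fin Nh) (j : Fin m) =>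
      if h : (i : ℕ) = (j : ℕ) ∧ (i : ℕ) < min Nh m then σ ⟨(i : ℕ), h.2⟩ else 0) * Zᵀ)
    (N : ℕ) (hN : N ≤ min Nh m)
    (ζ : Fin N → EuclideanSpace ℝ (Fin Nh))
    (hζ : ∀ (k : Fin N) (i : Fin Nh),
      ζ k i = W i ⟨(k : ℕ), lt_of_lt_of_le k.isLt (hN.trans (min_le_left Nh m))⟩) :
    Orthonormal ℝ ζ ∧
    (∑ j : Fin m,
        ‖u j - (Submodule.orthogonalProjectionOnto (Submodule.span ℝ (Set.range ζ)) (u j) :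
          EuclideanSpace ℝ (Fin Nh))‖ ^ 2) =
      (∑ i : Fin (min Nh m), if N ≤ (i : ℕ) then σ i ^ 2 else 0) ∧
    ∀ z : Fin N → EuclideanSpace ℝ (Fin Nh), Orthonormal ℝ z →
      (∑ j : Fin m,
          ‖u j - (Submodule.orthogonalProjectionOnto (Submodule.span ℝ (Set.range ζ)) (u j) :
            EuclideanSpace ℝ (Fin Nh))‖ ^ 2) ≤
        ∑ j : Fin m,
          ‖u j - (Submodule.orthogonalProjectionOnto (Submodule.span ℝ (Set.range z)) (u j) :
            EuclideanSpace ℝ (Fin Nh))‖ ^ 2 := by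
  have hNNh : N ≤ Nh := hN.trans (min_le_left Nh m)
  set b := columnOrthonormalBasis W hW
  have hdiag : CorrelationDiagonal b u (singularValueSq σ) :=
    correlationDiagonal_of_svd hS hW hZ hSVD
  have hζb : ζ = b ∘ Fin.castLE hNNh :=
    funext fun k => PiLp.ext fun i => by simp [b, columnOrthonormalBasis_apply, hζ, Fin.castLE]
  subst hζb
  refine ⟨b.orthonormal.comp _ (Fin.castLE_injective hNNh), ?_, fun z hz => ?_⟩
  · rw [← sum_range_sub_sum_range_singularValueSq σ hN]
    exact hdiag.podError_comp_castLE hNNh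
  · exact hdiag.podError_comp_castLE_le (antitone_singularValueSq hσ_nonneg hσ_anti) hNNh hz
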